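/- Let n ≥ 3, let V = {0,1,…,n−1} with the natural order, and let Q be a partial quasi-pairing of V. If there exists v ∈ V with 1 ≤ v and v+1 ≤ n−1 such that {v, v+1} ∈ Q, v̂_Q = v, and v−1 ∉ ∪Q, then {v−1, v+1} is a nontrivial module of Inv(underline(n), Q); in particular, Inv(underline(n), Q) is decomposable. -/

import Mathlib

open Set

/-- The arc relation of the tournament `Inv(underline(V), P)` obtained from the
transitive tournament on a linearly ordered type by reversing the arcs `(x,y)`
with `{x,y} ∈ P`. -/
def InvArc {α : Type*} [LinearOrder α] (P : Set (Set α)) (x y : α) : Prop :=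
  (x < y ∧ ({x, y} : Set α) ∉ P) ∨ (y < x ∧ ({x, y} : Set α) ∈ P)

/-- `M` is a module of the subtournament of `Inv(·, P)` induced on the vertex set `W`. -/
def IsModuleOn {α : Type*} [LinearOrder α] (P : Set (Set α)) (W M : Set α) : Prop :=
  M ⊆ W ∧ ∀ v ∈ W, v ∉ M →
    (∀ x ∈ M, InvArc P v x) ∨ (∀ x ∈ M, InvArc P x v)

/-- A subset of the vertex set `W` is trivial if it is empty, a singleton, or all of `W`. -/
def IsTrivialSubset {α : Type*} (W M : Set α) : Prop :=
  M = ∅ ∨ (∃ a, M = {a}) ∨ M = W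

/-- A nontrivial module of the tournament `Inv(·, P)` induced on `W`. -/
def IsNontrivialModuleOn {α : Type*} [LinearOrder α] (P : Set (Set α)) (W M : Set α) : Prop :=
  IsModuleOn P W M ∧ ¬ IsTrivialSubset W M

/-- The tournament `Inv(·, P)` induced on `W` is indecomposable: all its modules are trivial. -/
def IndecomposableOn {α : Type*} [LinearOrder α] (P : Set (Set α)) (W : Set α) : Prop :=
  ∀ M : Set α, IsModuleOn P W M → IsTrivialSubset W M

/-- The tournament `Inv(·, P)` induced on `W` is decomposable: it has a nontrivial module. -/
def DecomposableOn {α : Type*} [LinearOrder α] (P : Set (Set α)) (W : Set α) : Prop :=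
  ∃ M : Set α, IsNontrivialModuleOn P W M

/-- A co-module of the tournament `Inv(·, P)` on `W`: a subset `M` of `W` such that
`M` or `W ∖ M` is a nontrivial module. -/
def IsCoModuleOn {α : Type*} [LinearOrder α] (P : Set (Set α)) (W M : Set α) : Prop :=
  M ⊆ W ∧ (IsNontrivialModuleOn P W M ∨ IsNontrivialModuleOn P W (W \ M))

/-- `mc(underline(W))`: the family of minimal co-modules of the transitive tournament on `W`
(a minimal co-module contains no other co-module). -/
def mcOn {α : Type*} [LinearOrder α] (W : Set α) : Set (Set α) :=
  {M | IsCoModuleOn (∅ : Set (Set α)) W M ∧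
    ∀ C : Set α, IsCoModuleOn (∅ : Set (Set α)) W C → C ⊆ M → C = M}

/-- `S` is a transversal of the family `F`: it meets every member of `F`. -/
def TransversalOf {α : Type*} (S : Set α) (F : Set (Set α)) : Prop :=
  ∀ C ∈ F, (S ∩ C).Nonempty

/-- A partial pairing of `V`: a set of pairwise disjoint 2-element subsets of `V`. -/
def IsPartialPairingOn {α : Type*} (V : Set α) (P : Set (Set α)) : Prop :=
  (∀ B ∈ P, B ⊆ V ∧ B.ncard = 2) ∧
  ∀ B ∈ P, ∀ C ∈ P, B ≠ C → Disjoint B C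

/-- `I` is an interval of the totally ordered set `X`: every element of `X ∖ I` is greater
than all elements of `I` or smaller than all of them. -/
def IsIntervalOf {α : Type*} [LinearOrder α] (X I : Set α) : Prop :=
  I ⊆ X ∧ ∀ v ∈ X \ I, (∀ i ∈ I, v < i) ∨ (∀ i ∈ I, i < v)

/-- A nontrivial interval of `X`. -/
def IsNontrivialIntervalOf {α : Type*} [LinearOrder α] (X I : Set α) : Prop :=
  IsIntervalOf X I ∧ ¬ IsTrivialSubset X I

/-- A family of blocks `P` on the totally ordered set `X` is irreducible if no nontrivial
interval of `X` is a union of blocks of `P`. -/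
def IrreducibleOn {α : Type*} [LinearOrder α] (X : Set α) (P : Set (Set α)) : Prop :=
  ∀ R ⊆ P, ¬ IsNontrivialIntervalOf X (⋃₀ R)

/-- A partial quasi-pairing of `V`: a set `Q` of `m+1` two-element subsets of `V` (`m ≥ 1`)
whose union has size `2m+1`. -/
def IsPartialQuasiPairingOn {α : Type*} (V : Set α) (Q : Set (Set α)) : Prop :=
  (∀ B ∈ Q, B ⊆ V ∧ B.ncard = 2) ∧
  ∃ m : ℕ, 1 ≤ m ∧ (⋃₀ Q).ncard = 2 * m + 1 ∧ Q.ncard = m + 1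

/-- The distinguished data of a quasi-pairing `Q`: `vh = v̂_Q` is the element lying in the two
blocks `{vh, vm}` and `{vh, vp}` of `Q`, with `vm = v_Q^- < v_Q^+ = vp`. -/
def QPData {α : Type*} [LinearOrder α] (Q : Set (Set α)) (vh vm vp : α) : Prop :=
  ({vh, vm} : Set α) ∈ Q ∧ ({vh, vp} : Set α) ∈ Q ∧ vm < vp

/-- `Q_part`: the partition of `⋃₀ Q` obtained from `Q` by merging its two intersecting
blocks into `B_Q = {v̂_Q, v_Q^-, v_Q^+}`. -/
def QPart {α : Type*} [LinearOrder α] (Q : Set (Set α)) (vh vm vp : α) : Set (Set α) :=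
  (Q \ {({vh, vm} : Set α), ({vh, vp} : Set α)}) ∪ {({vh, vm, vp} : Set α)}

/-!
Counting shows that in a partial quasi-pairing any `k` blocks cover at least `2k - 1` points, so
three blocks never fit into four points. Hence `v̂_Q` is the only vertex lying in two blocks, and
`{v, v + 1}` is the only block through `v + 1`. With `v - 1` in no block, `v` receives arcs from
both `v - 1` and `v + 1`, while every other vertex is compared with them by the natural order.
-/

lemma Set.ncard_sUnion_le_two_mul {α : Type*} {Q : Set (Set α)} (hQ : Q.Finite)
    (h : ∀ B ∈ Q, B.ncard ≤ 2) : (⋃₀ Q).ncard ≤ 2 * Q.ncard := by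
  induction Q, hQ using Set.Finite.induction_on with
  | empty => simp
  | @insert B S hB hS ih =>
    rw [sUnion_insert, ncard_insert_of_notMem hB hS]
    have hBS := ncard_union_le B (⋃₀ S)
    have hB2 := h B (mem_insert B S)
    have hS2 := ih fun C hC ↦ h C (mem_insert_of_mem B hC)
    omega

lemma Set.ncard_le_four {α : Type*} (a b c d : α) : ({a, b, c, d} : Set α).ncard ≤ 4 := by
  have ha := ncard_insert_le a {b, c, d}
  have hb := ncard_insert_le b {c, d}
  have hc := ncard_insert_le c {d}
  rw [ncard_singleton] at hc
  omega

namespace IsPartialQuasiPairingOn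

variable {α : Type*} {V : Set α} {Q : Set (Set α)}

theorem finite (hQ : IsPartialQuasiPairingOn V Q) : Q.Finite := by
  obtain ⟨-, m, -, -, hm⟩ := hQ
  exact finite_of_ncard_ne_zero (by omega)

theorem ne_of_pair_mem (hQ : IsPartialQuasiPairingOn V Q) {a b : α} (h : {a, b} ∈ Q) :
    a ≠ b := by
  rintro rfl
  have := (hQ.1 _ h).2
  rw [pair_eq_singleton, ncard_singleton] at this
  omega

/-- The blocks outside `T` cover at most `2 * #(Q \ T)` points, while `⋃₀ Q` has only one point
fewer than `2 * #Q`. -/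
theorem two_mul_ncard_le_ncard_sUnion_add_one (hQ : IsPartialQuasiPairingOn V Q)
    {T : Set (Set α)} (hT : T ⊆ Q) : 2 * T.ncard ≤ (⋃₀ T).ncard + 1 := by
  have hQfin := hQ.finite
  obtain ⟨hblocks, m, -, hU, hm⟩ := hQ
  have hsplit : ⋃₀ Q = ⋃₀ T ∪ ⋃₀ (Q \ T) := by
    rw [← sUnion_union, union_sdiff_cancel hT]
  have hrest : (⋃₀ (Q \ T)).ncard ≤ 2 * (Q \ T).ncard :=
    ncard_sUnion_le_two_mul (hQfin.subset sdiff_subset) fun B hB ↦ (hblocks B hB.1).2.le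
  have hunion := ncard_union_le (⋃₀ T) (⋃₀ (Q \ T))
  have hTQ := ncard_le_ncard hT hQfin
  rw [← hsplit, hU] at hunion
  rw [ncard_sdiff hT (hQfin.subset hT), hm] at hrest
  omega

theorem not_union_subset_four (hQ : IsPartialQuasiPairingOn V Q)
    {B₁ B₂ B₃ : Set α} (h₁ : B₁ ∈ Q) (h₂ : B₂ ∈ Q) (h₃ : B₃ ∈ Q)
    (h₁₂ : B₁ ≠ B₂) (h₁₃ : B₁ ≠ B₃) (h₂₃ : B₂ ≠ B₃) (a b c d : α) :
    ¬ B₁ ∪ B₂ ∪ B₃ ⊆ {a, b, c, d} := by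
  intro hsub
  have hT := hQ.two_mul_ncard_le_ncard_sUnion_add_one (T := {B₁, B₂, B₃})
    (by simp [insert_subset_iff, h₁, h₂, h₃])
  rw [ncard_insert_of_notMem (by simp [h₁₂, h₁₃]), ncard_pair h₂₃, sUnion_insert, sUnion_pair,
    ← union_assoc] at hT
  have h4 := (ncard_le_ncard hsub (toFinite _)).trans (ncard_le_four a b c d)
  omega

theorem eq_of_pair_mem_of_pair_mem [LinearOrder α] (hQ : IsPartialQuasiPairingOn V Q)
    {vh vm vp : α} (hdata : QPData Q vh vm vp) {a w : α} (ha : {vh, a} ∈ Q) (hw : {w, a} ∈ Q) :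
    w = vh := by
  obtain ⟨hm, hp, hmp⟩ := hdata
  have hvm := hQ.ne_of_pair_mem hm
  have hvp := hQ.ne_of_pair_mem hp
  have hva := hQ.ne_of_pair_mem ha
  have hmp' : ({vh, vm} : Set α) ≠ {vh, vp} := by
    simp [pair_eq_pair_iff, hmp.ne, hvp]
  have ha' : a = vm ∨ a = vp := by
    by_contra! h
    refine hQ.not_union_subset_four ha hm hp ?_ ?_ hmp' vh a vm vp ?_ <;>
      simp [pair_eq_pair_iff, subset_def, h.1, h.2, hva, hvm, hvp]
  by_contra hwv
  refine hQ.not_union_subset_four hm hp hw hmp' ?_ ?_ vh vm vp w ?_ <;>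
    simp [pair_eq_pair_iff, subset_def] <;> aesop

end IsPartialQuasiPairingOn

/-- `b` is dominated by both `a` and `c` (the arc `b → c` is reversed); every other vertex meets
no block through `a` or `c`, so it is compared with both by the transitive order. -/
theorem isModuleOn_pair_of_covBy {α : Type*} [LinearOrder α] {P : Set (Set α)} {W : Set α}
    {a b c : α} (hab : a ⋖ b) (hbc : b ⋖ c) (haW : a ∈ W) (hcW : c ∈ W)
    (hbcP : {b, c} ∈ P) (ha : a ∉ ⋃₀ P) (hc : ∀ w, {w, c} ∈ P → w = b) :
    IsModuleOn P W {a, c} := by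
  have ha' : ∀ w, {a, w} ∉ P ∧ {w, a} ∉ P := fun w ↦
    ⟨fun h ↦ ha ⟨_, h, mem_insert a {w}⟩, fun h ↦ ha ⟨_, h, mem_insert_of_mem w rfl⟩⟩
  refine ⟨by simp [insert_subset_iff, haW, hcW], fun w _ hw ↦ ?_⟩
  simp only [mem_insert_iff, mem_singleton_iff, not_or] at hw
  simp only [mem_insert_iff, mem_singleton_iff, forall_eq_or_imp, forall_eq, InvArc]
  rcases lt_trichotomy w b with hwb | rfl | hbw
  · have hwa : w < a := (hab.le_of_lt hwb).lt_of_ne hw.1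
    exact .inl ⟨.inl ⟨hwa, (ha' w).2⟩, 
      .inl ⟨hwa.trans (hab.lt.trans hbc.lt), fun h ↦ hwb.ne (hc w h)⟩⟩
  · exact .inr ⟨.inl ⟨hab.lt, (ha' w).1⟩, .inr ⟨hbc.lt, pair_comm c w ▸ hbcP⟩⟩
  · have hcw : c < w := (hbc.ge_of_gt hbw).lt_of_ne' hw.2
    exact .inr ⟨.inl ⟨(hab.lt.trans hbc.lt).trans hcw, (ha' w).1⟩,
      .inl ⟨hcw, fun h ↦ hbw.ne' (hc w (pair_comm c w ▸ h))⟩⟩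

theorem not_isTrivialSubset_pair {α : Type*} {W : Set α} {a b c : α} (hac : a ≠ c) (hb : b ∈ W)
    (hba : b ≠ a) (hbc : b ≠ c) : ¬ IsTrivialSubset W {a, c} := by
  rintro (h | ⟨x, h⟩ | rfl)
  · exact (insert_nonempty a {c}).ne_empty h
  · exact hac ((eq_of_mem_singleton (h ▸ mem_insert a {c})).trans
      (eq_of_mem_singleton (h ▸ mem_insert_of_mem a rfl)).symm)
  · rcases hb with rfl | rfl <;> contradiction

theorem stmt_17_general (n : ℕ) (Q : Set (Set ℕ))
    (hQ : IsPartialQuasiPairingOn (Set.Iio n) Q)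
    (vh vm vp : ℕ) (hdata : QPData Q vh vm vp)
    (v : ℕ) (hv1 : 1 ≤ v) (hv2 : v + 1 ≤ n - 1)
    (h1 : ({v, v + 1} : Set ℕ) ∈ Q) (h2 : vh = v) (h3 : v - 1 ∉ ⋃₀ Q) :
    IsNontrivialModuleOn Q (Set.Iio n) {v - 1, v + 1} ∧
      DecomposableOn Q (Set.Iio n) := by
  subst vh
  have hcov : v - 1 ⋖ v := Nat.sub_add_cancel hv1 ▸ Order.covBy_add_one (v - 1)
  have hmod : IsNontrivialModuleOn Q (Iio n) {v - 1, v + 1} :=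
    ⟨isModuleOn_pair_of_covBy hcov (Order.covBy_add_one v) (by simp; omega) (by simp; omega)
      h1 h3 fun _ hw ↦ hQ.eq_of_pair_mem_of_pair_mem hdata h1 hw,
     not_isTrivialSubset_pair (b := v) (by omega) (by simp; omega) (by omega) (by omega)⟩
  exact ⟨hmod, _, hmod⟩

/-- Let `n ≥ 3`, `V = {0, …, n−1}`, and `Q` a partial quasi-pairing of
`V` with distinguished data `(vh, vm, vp)`. If there is `v ∈ V` with `1 ≤ v`,
`v + 1 ≤ n − 1`, `{v, v+1} ∈ Q`, `v̂_Q = v`, and `v − 1 ∉ ⋃₀ Q`, then `{v − 1, v + 1}`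
is a nontrivial module of `Inv(underline(n), Q)`; in particular, `Inv(underline(n), Q)`
is decomposable. -/
theorem stmt_17 (n : ℕ) (hn : 3 ≤ n) (Q : Set (Set ℕ))
    (hQ : IsPartialQuasiPairingOn (Set.Iio n) Q)
    (vh vm vp : ℕ) (hdata : QPData Q vh vm vp)
    (v : ℕ) (hv1 : 1 ≤ v) (hv2 : v + 1 ≤ n - 1)
    (h1 : ({v, v + 1} : Set ℕ) ∈ Q) (h2 : vh = v) (h3 : v - 1 ∉ ⋃₀ Q) :
    IsNontrivialModuleOn Q (Set.Iio n) {v - 1, v + 1} ∧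
      DecomposableOn Q (Set.Iio n) :=
  stmt_17_general n Q hQ vh vm vp hdata v hv1 hv2 h1 h2 h3
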